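/- Let k < 0 and let X be a k-lipschitz convex field defined over all of ℍ². Then there is exactly one point p ∈ ℍ² with 0 ∈ X(p). -/

import Mathlib

noncomputable section

/-- Minkowski space `ℝ^{2,1}` as `Fin 3 → ℝ`. -/
abbrev V : Type := Fin 3 → ℝ

/-- The Minkowski form `⟨x|y⟩ = x₁y₁ + x₂y₂ − x₃y₃`. -/
def mink (x y : V) : ℝ := x 0 * y 0 + x 1 * y 1 - x 2 * y 2

/-- The Minkowski cross product. -/
def mcross (x y : V) : V :=
  ![x 1 * y 2 - x 2 * y 1, x 2 * y 0 - x 0 * y 2, -(x 0 * y 1) + x 1 * y 0]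

/-- The hyperbolic plane: upper sheet of the hyperboloid. -/
def H2 : Set V := {p | mink p p = -1 ∧ 0 < p 2}

/-- Inverse hyperbolic cosine. -/
def acosh (x : ℝ) : ℝ := Real.log (x + Real.sqrt (x ^ 2 - 1))

/-- Hyperbolic distance. -/
def hdist (p q : V) : ℝ := acosh (-(mink p q))

/-- Norm of a (spacelike) tangent vector. -/
def mnorm (x : V) : ℝ := Real.sqrt (mink x x)

/-- The point `exp_p(t x)`. -/
def mexp (p x : V) (t : ℝ) : V :=
  if x = 0 then p
  else Real.cosh (t * mnorm x) • p + (Real.sinh (t * mnorm x) / mnorm x) • x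

/-- `d'(x_p, x_q)`: the derivative at `t = 0` of `t ↦ d(exp_p(t x_p), exp_q(t x_q))`. -/
def dprime (p xp q xq : V) : ℝ :=
  deriv (fun t => hdist (mexp p xp t) (mexp q xq t)) 0

/-- A convex field on `ℍ²`. -/
def IsConvexField (X : Set (V × V)) : Prop :=
  IsClosed X ∧ (∀ px ∈ X, px.1 ∈ H2 ∧ mink px.2 px.1 = 0) ∧
    ∀ p : V, Convex ℝ {x : V | (p, x) ∈ X}

/-- The fiber `X(p)` of a convex field. -/
def fiberAt (X : Set (V × V)) (p : V) : Set V := {x | (p, x) ∈ X}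

/-- A convex field is defined over `A` if all fibers over `A` are nonempty. -/
def DefinedOver (X : Set (V × V)) (A : Set V) : Prop := ∀ p ∈ A, (fiberAt X p).Nonempty

/-- A convex field is `k`-lipschitz. -/
def LipschitzField (k : ℝ) (X : Set (V × V)) : Prop :=
  ∀ p xp q xq, (p, xp) ∈ X → (q, xq) ∈ X → p ≠ q → dprime p xp q xq ≤ k * hdist p q

/-- A (continuous) vector field on `ℍ²`. -/
def IsVectorField (X : V → V) : Prop := ContinuousOn X H2 ∧ ∀ p ∈ H2, mink (X p) p = 0

/-- A vector field is `k`-lipschitz. -/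
def LipschitzVF (k : ℝ) (X : V → V) : Prop :=
  ∀ p ∈ H2, ∀ q ∈ H2, p ≠ q → dprime p (X p) q (X q) ≤ k * hdist p q

/-- Hyperbolic convexity of a subset of `ℍ²`. -/
def HConvex (C : Set V) : Prop :=
  ∀ p ∈ C, ∀ q ∈ C, ∀ m ∈ H2, hdist p m + hdist m q = hdist p q → m ∈ C

/-- Hyperbolic convex hull. -/
def hconvexHull (A : Set V) : Set V := ⋂₀ {C : Set V | A ⊆ C ∧ C ⊆ H2 ∧ HConvex C}

/-- Interior of a subset of `ℍ²` relative to `ℍ²`. -/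
def relInterior (A : Set V) : Set V :=
  {p | p ∈ H2 ∧ ∃ O : Set V, IsOpen O ∧ p ∈ O ∧ O ∩ H2 ⊆ A}

/-- Linear automorphisms of `ℝ³`, a group under composition. -/
abbrev GL3 : Type := V ≃ₗ[ℝ] V

/-- Membership in `G₀`: preserves the Minkowski form, determinant one, preserves `ℍ²`. -/
def InG0 (g : GL3) : Prop :=
  (∀ x y : V, mink (g x) (g y) = mink x y) ∧
    LinearMap.det g.toLinearMap = 1 ∧ ∀ p ∈ H2, g p ∈ H2

/-- Properly discontinuous action on (a subset of) a topological space. -/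
def ProperlyDiscOn {Γ α : Type*} [TopologicalSpace α] (act : Γ → α → α) (S : Set α) : Prop :=
  ∀ K L : Set α, K ⊆ S → L ⊆ S → IsCompact K → IsCompact L →
    {γ : Γ | (act γ '' K ∩ L).Nonempty}.Finite

/-- A `j`-cocycle. -/
def IsCocycle {Γ : Type*} [Group Γ] (j : Γ →* GL3) (u : Γ → V) : Prop :=
  ∀ γ₁ γ₂ : Γ, u (γ₁ * γ₂) = u γ₁ + j γ₁ (u γ₂)

/-- Convex cocompact homomorphism. -/
def ConvexCocompact {Γ : Type*} [Group Γ] (j : Γ →* GL3) : Prop :=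
  Function.Injective j ∧
    ProperlyDiscOn (fun (γ : Γ) (p : V) => j γ p) H2 ∧
    ∃ C K : Set V, C.Nonempty ∧ IsClosed C ∧ C ⊆ H2 ∧ HConvex C ∧
      (∀ γ : Γ, j γ '' C = C) ∧ IsCompact K ∧ C ⊆ ⋃ γ : Γ, j γ '' K

/-- The convex core of `j`. -/
def ConvexCore {Γ : Type*} [Group Γ] (j : Γ →* GL3) : Set V :=
  ⋂₀ {C : Set V | C.Nonempty ∧ IsClosed C ∧ C ⊆ H2 ∧ HConvex C ∧ ∀ γ : Γ, j γ '' C = C}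

/-- `(j,u)`-equivariance of a convex field. -/
def EquivField {Γ : Type*} [Group Γ] (j : Γ →* GL3) (u : Γ → V) (X : Set (V × V)) : Prop :=
  ∀ (γ : Γ), ∀ p ∈ H2,
    fiberAt X (j γ p) = (fun x => j γ x + mcross (u γ) (j γ p)) '' fiberAt X p

/-- `(j,u)`-equivariance of a vector field. -/
def EquivVF {Γ : Type*} [Group Γ] (j : Γ →* GL3) (u : Γ → V) (X : V → V) : Prop :=
  ∀ (γ : Γ), ∀ p ∈ H2, X (j γ p) = j γ (X p) + mcross (u γ) (j γ p)

/-- Translation length `λ(g) = inf_{p ∈ ℍ²} d(p, g·p)`. -/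
def transLength (g : V → V) : ℝ := sInf ((fun p => hdist p (g p)) '' H2)

/-- A transformation is hyperbolic if its translation length is positive. -/
def IsHyperbolic (g : V → V) : Prop := 0 < transLength g

/-- `cross(v)` as a linear map `w ↦ v ∧ w`. -/
def crossLM (v : V) : V →ₗ[ℝ] V where
  toFun w := mcross v w
  map_add' w₁ w₂ := by
    funext i
    fin_cases i <;>
      simp [mcross, Pi.add_apply] <;> ring
  map_smul' c w := by
    funext i
    fin_cases i <;>
      simp [mcross, Pi.smul_apply, smul_eq_mul] <;> ring

/-- `cross(v)` as a continuous linear map. -/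
def crossCLM (v : V) : V →L[ℝ] V := LinearMap.toContinuousLinearMap (crossLM v)

/-- A geodesic line of `ℍ²`. -/
def IsGeodesicLine (ℓ : Set V) : Prop :=
  ∃ a ∈ H2, ∃ b ∈ H2, a ≠ b ∧ ℓ = {m ∈ H2 | mink m (mcross a b) = 0}

/-- A `j(Γ)`-invariant geodesic lamination in the convex core. -/
def IsLamination {Γ : Type*} [Group Γ] (j : Γ →* GL3) (L : Set (Set V)) : Prop :=
  L.Nonempty ∧
  (∀ ℓ ∈ L, IsGeodesicLine ℓ ∧ ℓ ⊆ ConvexCore j) ∧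
  (∀ ℓ₁ ∈ L, ∀ ℓ₂ ∈ L, ℓ₁ ≠ ℓ₂ → ℓ₁ ∩ ℓ₂ = ∅) ∧
  IsClosed (⋃₀ L) ∧
  ∀ (γ : Γ), ∀ ℓ ∈ L, j γ '' ℓ ∈ L

/-- The geodesic flow on the tangent bundle. -/
def gflow (t : ℝ) (px : V × V) : V × V :=
  if px.2 = 0 then px
  else (mexp px.1 px.2 t,
    (mnorm px.2 * Real.sinh (t * mnorm px.2)) • px.1 + Real.cosh (t * mnorm px.2) • px.2)

/-- Parallel transport from `p` to `q` along the geodesic. -/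
def ptransport (p q x : V) : V := x + (mink x q / (1 - mink p q)) • (p + q)

/-!
Uniqueness: for `(p, x_p), (q, x_q) ∈ X` with `p ≠ q`, the lipschitz condition with `k < 0`
forces `⟨x_p|q⟩ + ⟨p|x_q⟩ > 0`, which is impossible when `x_p = x_q = 0`.

Existence is an intermediate value argument done twice, in Fermi coordinates `(s, t)` about a
geodesic. Along each leaf `t ↦ fermi s t`, itself a geodesic, the tangential component of `X`
decreases at rate at least `-k`; so on each leaf there is exactly one point carrying a vector of
`X` normal to the leaf. Across the leaves, the normal component of these vectors can change sign
only once, and it is positive far to one side and negative far to the other; at the crossing, a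
convex combination of two vectors of the fibre vanishes. Both steps need the fibres of `X` to be
locally bounded, which follows from `⟨x_p|r⟩ ≥ -⟨p|y⟩` for a fixed `(r, y) ∈ X`.
-/

open Filter Topology Metric Real

/-! ### The Minkowski form and the hyperboloid -/

lemma mink_comm (x y : V) : mink x y = mink y x := by
  simp only [mink]; ring

lemma mink_add_left (x y w : V) : mink (x + y) w = mink x w + mink y w := by
  simp only [mink, Pi.add_apply]; ring

lemma mink_add_right (x y w : V) : mink x (y + w) = mink x y + mink x w := by
  simp only [mink, Pi.add_apply]; ring

lemma mink_sub_right (x y w : V) : mink x (y - w) = mink x y - mink x w := by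
  simp only [mink, Pi.sub_apply]; ring

lemma mink_smul_left (a : ℝ) (x y : V) : mink (a • x) y = a * mink x y := by
  simp only [mink, Pi.smul_apply, smul_eq_mul]; ring

lemma mink_smul_right (a : ℝ) (x y : V) : mink x (a • y) = a * mink x y := by
  simp only [mink, Pi.smul_apply, smul_eq_mul]; ring

lemma mink_smul_add_smul_left (a b : ℝ) (x y w : V) :
    mink (a • x + b • y) w = a * mink x w + b * mink y w := by
  rw [mink_add_left, mink_smul_left, mink_smul_left]

def minkForm : LinearMap.BilinForm ℝ V :=
  LinearMap.mk₂ ℝ mink mink_add_left mink_smul_left mink_add_right mink_smul_right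

lemma abs_mink_le (x y : V) : |mink x y| ≤ 3 * (‖x‖ * ‖y‖) := by
  have h : ∀ i j : Fin 3, |x i * y j| ≤ ‖x‖ * ‖y‖ := fun i j => by
    rw [abs_mul]
    exact mul_le_mul (norm_le_pi_norm x i) (norm_le_pi_norm y j) (abs_nonneg _) (norm_nonneg _)
  unfold mink
  linarith [abs_sub (x 0 * y 0 + x 1 * y 1) (x 2 * y 2), abs_add_le (x 0 * y 0) (x 1 * y 1),
    h 0 0, h 1 1, h 2 2]

lemma Filter.Tendsto.mink {α : Type*} {l : Filter α} {y z : α → V} {a b : V}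
    (hy : Tendsto y l (𝓝 a)) (hz : Tendsto z l (𝓝 b)) :
    Tendsto (fun n => mink (y n) (z n)) l (𝓝 (mink a b)) := by
  have hy' := tendsto_pi_nhds.mp hy
  have hz' := tendsto_pi_nhds.mp hz
  exact (((hy' 0).mul (hz' 0)).add ((hy' 1).mul (hz' 1))).sub ((hy' 2).mul (hz' 2))

lemma HasDerivAt.mink {f g : ℝ → V} {f' g' : V} {t : ℝ}
    (hf : HasDerivAt f f' t) (hg : HasDerivAt g g' t) :
    HasDerivAt (fun t => mink (f t) (g t)) (mink f' (g t) + mink (f t) g') t := by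
  have hf' := hasDerivAt_pi.mp hf
  have hg' := hasDerivAt_pi.mp hg
  exact ((((hf' 0).mul (hg' 0)).add ((hf' 1).mul (hg' 1))).sub ((hf' 2).mul (hg' 2))).congr_deriv
    (by simp only [_root_.mink]; ring)

lemma mink_pos_of_past_causal {u p : V} (hp : p ∈ H2) (hu : u 0 ^ 2 + u 1 ^ 2 ≤ u 2 ^ 2)
    (hu2 : u 2 < 0) : 0 < mink u p := by
  obtain ⟨hp1, hp2⟩ := hp
  simp only [mink] at *
  have hneg : u 2 * p 2 < 0 := mul_neg_of_neg_of_pos hu2 hp2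
  have hsq : (u 0 * p 0 + u 1 * p 1) ^ 2 < (u 2 * p 2) ^ 2 := by
    nlinarith [sq_nonneg (u 0 * p 1 - u 1 * p 0), mul_pos_of_neg_of_neg hu2 hu2]
  nlinarith

lemma mink_lt_neg_one {p q : V} (hp : p ∈ H2) (hq : q ∈ H2) (hpq : p ≠ q) :
    mink p q < -1 := by
  by_contra! h
  have hcausal : (p - q) 0 ^ 2 + (p - q) 1 ^ 2 ≤ (p - q) 2 ^ 2 := by
    simp only [mink, H2, Set.mem_ofPred_eq, Pi.sub_apply] at *
    nlinarith
  rcases lt_trichotomy ((p - q) 2) 0 with hlt | heq | hgt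
  · have := mink_pos_of_past_causal hp hcausal hlt
    rw [show p - q = (1 : ℝ) • p + (-1 : ℝ) • q by module, mink_smul_add_smul_left, hp.1,
      mink_comm] at this
    linarith
  · have h01 : (p - q) 0 = 0 ∧ (p - q) 1 = 0 := by
      rw [heq] at hcausal
      constructor <;> nlinarith [sq_nonneg ((p - q) 0), sq_nonneg ((p - q) 1)]
    refine hpq (sub_eq_zero.mp (funext fun i => ?_))
    fin_cases i
    exacts [h01.1, h01.2, heq]
  · have hcausal' : (q - p) 0 ^ 2 + (q - p) 1 ^ 2 ≤ (q - p) 2 ^ 2 := by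
      simp only [Pi.sub_apply] at hcausal ⊢; nlinarith
    have := mink_pos_of_past_causal hq hcausal' (by simp only [Pi.sub_apply] at hgt ⊢; linarith)
    rw [show q - p = (1 : ℝ) • q + (-1 : ℝ) • p by module, mink_smul_add_smul_left, hq.1] at this
    linarith

lemma mink_self_pos_of_tangent {p x : V} (hp : p ∈ H2) (hx : mink x p = 0) (hx0 : x ≠ 0) :
    0 < mink x x := by
  obtain ⟨hp1, hp2⟩ := hp
  simp only [mink] at hp1 hx ⊢
  have key : (x 0 * x 0 + x 1 * x 1 - x 2 * x 2) * p 2 ^ 2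
      = (x 0 * p 1 - x 1 * p 0) ^ 2 + x 0 ^ 2 + x 1 ^ 2 := by
    linear_combination (x 0 * p 0 + x 1 * p 1 + x 2 * p 2) * hx - (x 0 ^ 2 + x 1 ^ 2) * hp1
  by_contra! h
  have h0 : x 0 = 0 := by
    nlinarith [sq_nonneg (x 0 * p 1 - x 1 * p 0), sq_nonneg (x 1), sq_nonneg (p 2)]
  have h1 : x 1 = 0 := by
    nlinarith [sq_nonneg (x 0 * p 1 - x 1 * p 0), sq_nonneg (x 0), sq_nonneg (p 2)]
  have h2 : x 2 = 0 := by
    rw [h0, h1] at hx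
    exact (mul_eq_zero.mp (by linarith : x 2 * p 2 = 0)).resolve_right hp2.ne'
  exact hx0 (funext fun i => by fin_cases i <;> assumption)

lemma cosh_smul_add_sinh_smul_mem_H2 {p e : V} (hp : p ∈ H2) (he : mink e e = 1)
    (hep : mink e p = 0) (c : ℝ) : cosh c • p + sinh c • e ∈ H2 := by
  have hcs := cosh_sq_sub_sinh_sq c
  obtain ⟨hp1, hp2⟩ := hp
  simp only [mink] at hp1 he hep
  refine ⟨?_, ?_⟩
  · simp only [mink, Pi.add_apply, Pi.smul_apply, smul_eq_mul]
    linear_combination cosh c ^ 2 * hp1 + 2 * cosh c * sinh c * hep + sinh c ^ 2 * he - hcs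
  · have hlag : (e 2 * p 2) ^ 2 + (e 0 * p 1 - e 1 * p 0) ^ 2
        = (1 + e 2 ^ 2) * (p 2 ^ 2 - 1) := by
      rw [show e 2 * p 2 = e 0 * p 0 + e 1 * p 1 by linarith,
        show 1 + e 2 ^ 2 = e 0 ^ 2 + e 1 ^ 2 by linarith,
        show p 2 ^ 2 - 1 = p 0 ^ 2 + p 1 ^ 2 by linarith]
      ring
    have he2 : e 2 ^ 2 < p 2 ^ 2 := by nlinarith [sq_nonneg (e 0 * p 1 - e 1 * p 0)]
    have hsq : (sinh c * e 2) ^ 2 < (cosh c * p 2) ^ 2 := by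
      nlinarith [sq_nonneg (sinh c), sq_nonneg (e 2)]
    have hpos : 0 < cosh c * p 2 := mul_pos (cosh_pos c) hp2
    show 0 < cosh c * p 2 + sinh c * e 2
    nlinarith

/-! ### The derivative of the distance along geodesics -/

lemma mexp_zero (p x : V) : mexp p x 0 = p := by
  unfold mexp; split_ifs <;> simp

lemma hasDerivAt_mexp {p x : V} (hp : p ∈ H2) (hx : mink x p = 0) :
    HasDerivAt (mexp p x) x 0 := by
  by_cases hx0 : x = 0
  · subst hx0
    rw [show mexp p 0 = fun _ => p from funext fun _ => if_pos rfl]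
    exact hasDerivAt_const 0 p
  have ha : 0 < mnorm x := Real.sqrt_pos.mpr (mink_self_pos_of_tangent hp hx hx0)
  have hta : HasDerivAt (fun t : ℝ => t * mnorm x) (mnorm x) 0 := by
    simpa using (hasDerivAt_id (0 : ℝ)).mul_const (mnorm x)
  rw [show mexp p x = fun t => cosh (t * mnorm x) • p + (sinh (t * mnorm x) / mnorm x) • x
    from funext fun _ => if_neg hx0]
  exact ((hta.cosh.smul_const p).add ((hta.sinh.div_const (mnorm x)).smul_const x)).congr_deriv
    (by simp [ha.ne'])

lemma hdist_eq_arcosh (p q : V) : hdist p q = arcosh (-mink p q) := rfl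

lemma hasDerivAt_hdist_mexp {p xp q xq : V} (hp : p ∈ H2) (hq : q ∈ H2) (hpq : p ≠ q)
    (hxp : mink xp p = 0) (hxq : mink xq q = 0) :
    HasDerivAt (fun t => hdist (mexp p xp t) (mexp q xq t))
      (-(mink xp q + mink p xq) / √(mink p q ^ 2 - 1)) 0 := by
  have hm := ((hasDerivAt_mexp hp hxp).mink (hasDerivAt_mexp hq hxq)).neg
  rw [mexp_zero, mexp_zero] at hm
  have ha := hasDerivAt_arcosh (x := -mink p q)
    (by simp only [Set.mem_Ioi]; linarith [mink_lt_neg_one hp hq hpq])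
  exact (ha.comp_of_eq 0 hm (by simp [mexp_zero])).congr_deriv (by rw [neg_sq]; field_simp)

lemma hdist_mul_sqrt_pos {p q : V} (hp : p ∈ H2) (hq : q ∈ H2) (hpq : p ≠ q) :
    0 < hdist p q * √(mink p q ^ 2 - 1) := by
  have hlt := mink_lt_neg_one hp hq hpq
  exact mul_pos (arcosh_pos (by linarith)) (Real.sqrt_pos.mpr (by nlinarith))

/-! ### Fermi coordinates -/

/-- Fermi coordinates about the geodesic `s ↦ fermi s 0`: for fixed `s`, the leaf
`t ↦ fermi s t` is the unit-speed geodesic orthogonal to it at `fermi s 0`, and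
`(fermiTangent s t, fermiNormal s, fermi s t)` is a Minkowski-orthonormal frame. -/
def fermi (s t : ℝ) : V := ![cosh t * sinh s, sinh t, cosh t * cosh s]

def fermiTangent (s t : ℝ) : V := ![sinh t * sinh s, cosh t, sinh t * cosh s]

def fermiNormal (s : ℝ) : V := ![cosh s, 0, sinh s]

lemma mink_fermi_fermi (s t s' t' : ℝ) :
    mink (fermi s t) (fermi s' t') = sinh t * sinh t' - cosh t * cosh t' * cosh (s - s') := by
  simp only [mink, fermi, cosh_sub, Matrix.cons_val_zero, Matrix.cons_val_one,
    Matrix.cons_val_two, Matrix.head_cons, Matrix.tail_cons]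
  ring

lemma mink_fermiTangent_fermi (s t s' t' : ℝ) :
    mink (fermiTangent s t) (fermi s' t')
      = cosh t * sinh t' - sinh t * cosh t' * cosh (s - s') := by
  simp only [mink, fermiTangent, fermi, cosh_sub, Matrix.cons_val_zero, Matrix.cons_val_one,
    Matrix.cons_val_two, Matrix.head_cons, Matrix.tail_cons]
  ring

lemma mink_fermiNormal_fermi (s s' t' : ℝ) :
    mink (fermiNormal s) (fermi s' t') = cosh t' * sinh (s' - s) := by
  simp only [mink, fermiNormal, fermi, sinh_sub, Matrix.cons_val_zero, Matrix.cons_val_one,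
    Matrix.cons_val_two, Matrix.head_cons, Matrix.tail_cons]
  ring

lemma mink_fermi_fermi_same_leaf (s t t' : ℝ) :
    mink (fermi s t) (fermi s t') = -cosh (t' - t) := by
  rw [mink_fermi_fermi, sub_self, cosh_zero, cosh_sub]; ring

lemma fermi_mem_H2 (s t : ℝ) : fermi s t ∈ H2 := by
  refine ⟨?_, mul_pos (cosh_pos t) (cosh_pos s)⟩
  rw [mink_fermi_fermi_same_leaf, sub_self, cosh_zero]

lemma fermi_inj {s t s' t' : ℝ} : fermi s t = fermi s' t' ↔ s = s' ∧ t = t' := by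
  refine ⟨fun h => ?_, fun ⟨hs, ht⟩ => hs ▸ ht ▸ rfl⟩
  have ht : t = t' := sinh_injective (by simpa [fermi] using congrFun h 1)
  subst ht
  have h0 : cosh t * sinh s = cosh t * sinh s' := by simpa [fermi] using congrFun h 0
  exact ⟨sinh_injective (mul_left_cancel₀ (cosh_pos t).ne' h0), rfl⟩

lemma fermi_frame_expansion (s t : ℝ) (w : V) :
    w = mink w (fermiTangent s t) • fermiTangent s t + mink w (fermiNormal s) • fermiNormal s
      - mink w (fermi s t) • fermi s t := by
  have ht := cosh_sq t
  have hs := cosh_sq s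
  funext i
  fin_cases i <;>
    simp only [mink, fermiTangent, fermiNormal, fermi, Pi.add_apply, Pi.sub_apply, Pi.smul_apply,
      smul_eq_mul, Matrix.cons_val_zero, Matrix.cons_val_one, Matrix.cons_val_two,
      Matrix.head_cons, Matrix.tail_cons, Fin.zero_eta, Fin.mk_one, Fin.reduceFinMk]
  · linear_combination (-(w 0)) * hs + (w 0 * sinh s ^ 2 - w 2 * sinh s * cosh s) * ht
  · linear_combination (-(w 1)) * ht
  · linear_combination (-(w 2)) * hs + (w 0 * sinh s * cosh s - w 2 * cosh s ^ 2) * ht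

lemma mink_eq_of_tangent_fermi {s t : ℝ} {x : V} (hx : mink x (fermi s t) = 0) (q : V) :
    mink x q = mink q (fermiTangent s t) * mink x (fermiTangent s t)
      + mink q (fermiNormal s) * mink x (fermiNormal s) := by
  conv_lhs => rw [fermi_frame_expansion s t q]
  rw [mink_sub_right, mink_add_right, mink_smul_right, mink_smul_right, mink_smul_right, hx]
  ring

lemma eq_zero_of_tangent_fermi {s t : ℝ} {x : V} (hx : mink x (fermi s t) = 0)
    (hxT : mink x (fermiTangent s t) = 0) (hxN : mink x (fermiNormal s) = 0) : x = 0 := by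
  simpa [hx, hxT, hxN] using fermi_frame_expansion s t x

lemma mink_fermi_same_leaf_of_tangent {s t : ℝ} {x : V} (hx : mink x (fermi s t) = 0)
    (t' : ℝ) : mink x (fermi s t') = sinh (t' - t) * mink x (fermiTangent s t) := by
  rw [mink_eq_of_tangent_fermi hx, mink_comm _ (fermiTangent s t), mink_fermiTangent_fermi,
    mink_comm _ (fermiNormal s), mink_fermiNormal_fermi, sub_self, sinh_zero, cosh_zero, sinh_sub]
  ring

lemma mink_fermi_of_normal {s t : ℝ} {x : V} (hx : mink x (fermi s t) = 0)
    (hxT : mink x (fermiTangent s t) = 0) (s' t' : ℝ) :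
    mink x (fermi s' t') = cosh t' * sinh (s' - s) * mink x (fermiNormal s) := by
  rw [mink_eq_of_tangent_fermi hx, hxT, mink_comm _ (fermiNormal s), mink_fermiNormal_fermi]
  ring

lemma continuous_fermi : Continuous fun st : ℝ × ℝ => fermi st.1 st.2 := by
  refine continuous_pi fun i => ?_
  fin_cases i <;> simp only [fermi] <;> fun_prop

lemma continuous_fermiTangent : Continuous fun st : ℝ × ℝ => fermiTangent st.1 st.2 := by
  refine continuous_pi fun i => ?_
  fin_cases i <;> simp only [fermiTangent] <;> fun_prop

lemma continuous_fermiNormal : Continuous fermiNormal := by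
  refine continuous_pi fun i => ?_
  fin_cases i <;> simp only [fermiNormal] <;> fun_prop

lemma Filter.Tendsto.fermi {α : Type*} {l : Filter α} {s t : α → ℝ} {a b : ℝ}
    (hs : Tendsto s l (𝓝 a)) (ht : Tendsto t l (𝓝 b)) :
    Tendsto (fun n => fermi (s n) (t n)) l (𝓝 (fermi a b)) := by
  simpa [Function.comp_def] using (continuous_fermi.tendsto (a, b)).comp (hs.prodMk_nhds ht)

lemma Filter.Tendsto.fermiTangent {α : Type*} {l : Filter α} {s t : α → ℝ} {a b : ℝ}
    (hs : Tendsto s l (𝓝 a)) (ht : Tendsto t l (𝓝 b)) :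
    Tendsto (fun n => fermiTangent (s n) (t n)) l (𝓝 (fermiTangent a b)) := by
  simpa [Function.comp_def] using
    (continuous_fermiTangent.tendsto (a, b)).comp (hs.prodMk_nhds ht)

lemma Filter.Tendsto.fermiNormal {α : Type*} {l : Filter α} {s : α → ℝ} {a : ℝ}
    (hs : Tendsto s l (𝓝 a)) : Tendsto (fun n => fermiNormal (s n)) l (𝓝 (fermiNormal a)) := by
  simpa [Function.comp_def] using (continuous_fermiNormal.tendsto a).comp hs

lemma add_sinh_div_two_le_cosh {d : ℝ} (hd : 2 ≤ d) : 1 + sinh d / 2 ≤ cosh d := by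
  have hsq : exp d = exp (d / 2) ^ 2 := by rw [← exp_nat_mul]; ring_nf
  rw [cosh_eq, sinh_eq]
  nlinarith [add_one_le_exp (d / 2), exp_pos (-d)]

/-! ### An intermediate value theorem for convex-valued maps -/

section SignChange

variable {E : Type*} [AddCommGroup E] [Module ℝ E]

lemma Convex.exists_apply_eq_zero {S : Set E} (hS : Convex ℝ S) (f : E →ₗ[ℝ] ℝ) {z z' : E}
    (hz : z ∈ S) (hz' : z' ∈ S) (h : 0 ≤ f z) (h' : f z' ≤ 0) : ∃ w ∈ S, f w = 0 :=
  (hS.linear_image f).ordConnected.out (Set.mem_image_of_mem f hz') (Set.mem_image_of_mem f hz)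
    ⟨h', h⟩

theorem exists_apply_eq_zero_of_sign_change {S : ℝ → Set E} {f : ℝ → E →ₗ[ℝ] ℝ}
    (hS : ∀ u, Convex ℝ (S u)) (hne : ∀ u, (S u).Nonempty)
    (hlim : ∀ (u : ℕ → ℝ) (c : ℝ) (z : ℕ → E), Tendsto u atTop (𝓝 c) →
      (∀ n, z n ∈ S (u n)) → ∃ w ∈ S c, MapClusterPt (f c w) atTop fun n => f (u n) (z n))
    (hprop : ∀ ⦃u u' z z'⦄, u < u' → z ∈ S u → z' ∈ S u' → 0 ≤ f u' z' → 0 < f u z)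
    (hpos : ∃ u, ∃ z ∈ S u, 0 < f u z) (hneg : ∃ u, ∃ z ∈ S u, f u z < 0) :
    ∃ u, ∃ z ∈ S u, f u z = 0 := by
  obtain ⟨u₁, z₁, hz₁, hf₁⟩ := hpos
  obtain ⟨u₂, z₂, hz₂, hf₂⟩ := hneg
  set A := {u | ∃ z ∈ S u, 0 < f u z}
  have hbdd : BddAbove A := ⟨u₂, fun u ⟨z, hz, hfz⟩ =>
    le_of_not_gt fun h => (hprop h hz₂ hz hfz.le).not_gt hf₂⟩
  set c := sSup A
  have hleft : ∀ u < c, ∀ z ∈ S u, 0 < f u z := fun u hu z hz => by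
    obtain ⟨a, ⟨za, hza, hfa⟩, hua⟩ :=
      exists_lt_of_lt_csSup (⟨u₁, z₁, hz₁, hf₁⟩ : A.Nonempty) hu
    exact hprop hua hz hza hfa.le
  have hright : ∀ u, c < u → ∀ z ∈ S u, f u z ≤ 0 := fun u hu z hz =>
    le_of_not_gt fun h => (le_csSup hbdd ⟨z, hz, h⟩).not_gt hu
  have hε : Tendsto (fun n : ℕ => 1 / ((n : ℝ) + 1)) atTop (𝓝 0) :=
    tendsto_one_div_add_atTop_nhds_zero_nat
  have hεpos : ∀ n : ℕ, 0 < 1 / ((n : ℝ) + 1) := fun n => by positivity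
  choose zl hzl using fun n : ℕ => hne (c - 1 / (n + 1))
  choose zr hzr using fun n : ℕ => hne (c + 1 / (n + 1))
  obtain ⟨w, hw, hwc⟩ := hlim _ c zl (by simpa using tendsto_const_nhds.sub hε) hzl
  obtain ⟨w', hw', hwc'⟩ := hlim _ c zr (by simpa using tendsto_const_nhds.add hε) hzr
  obtain ⟨z, hz, hfz⟩ := (hS c).exists_apply_eq_zero (f c) hw hw'
    (isClosed_Ici.mem_of_mapClusterPt hwc (Eventually.of_forall fun n =>
      (hleft _ (by linarith [hεpos n]) _ (hzl n)).le))
    (isClosed_Iic.mem_of_mapClusterPt hwc' (Eventually.of_forall fun n =>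
      hright _ (by linarith [hεpos n]) _ (hzr n)))
  exact ⟨c, z, hz, hfz⟩

end SignChange

/-! ### Lipschitz convex fields -/

section LipschitzField

variable {k : ℝ} {X : Set (V × V)}

lemma IsConvexField.mem_H2 (hX : IsConvexField X) {p x : V} (h : (p, x) ∈ X) : p ∈ H2 :=
  (hX.2.1 _ h).1

lemma IsConvexField.mink_eq_zero (hX : IsConvexField X) {p x : V} (h : (p, x) ∈ X) :
    mink x p = 0 :=
  (hX.2.1 _ h).2

lemma IsConvexField.convex (hX : IsConvexField X) (p : V) : Convex ℝ (fiberAt X p) :=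
  hX.2.2 p

theorem LipschitzField.neg_mul_hdist_mul_le (hX : IsConvexField X) (hlip : LipschitzField k X)
    {p xp q xq : V} (hpX : (p, xp) ∈ X) (hqX : (q, xq) ∈ X) (hpq : p ≠ q) :
    -k * (hdist p q * √(mink p q ^ 2 - 1)) ≤ mink xp q + mink p xq := by
  have hp := hX.mem_H2 hpX
  have hq := hX.mem_H2 hqX
  have hr : 0 < √(mink p q ^ 2 - 1) := by
    have := mink_lt_neg_one hp hq hpq
    exact Real.sqrt_pos.mpr (by nlinarith)
  have h := hlip p xp q xq hpX hqX hpq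
  rw [dprime, (hasDerivAt_hdist_mexp hp hq hpq (hX.mink_eq_zero hpX)
    (hX.mink_eq_zero hqX)).deriv, div_le_iff₀ hr] at h
  linarith

theorem LipschitzField.mink_add_pos (hk : k < 0) (hX : IsConvexField X)
    (hlip : LipschitzField k X) {p xp q xq : V} (hpX : (p, xp) ∈ X) (hqX : (q, xq) ∈ X)
    (hpq : p ≠ q) : 0 < mink xp q + mink p xq :=
  (mul_pos (neg_pos.mpr hk) (hdist_mul_sqrt_pos (hX.mem_H2 hpX) (hX.mem_H2 hqX) hpq)).trans_le
    (hlip.neg_mul_hdist_mul_le hX hpX hqX hpq)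

theorem LipschitzField.mink_add_nonneg (hk : k < 0) (hX : IsConvexField X)
    (hlip : LipschitzField k X) {p xp q xq : V} (hpX : (p, xp) ∈ X) (hqX : (q, xq) ∈ X) :
    0 ≤ mink xp q + mink p xq := by
  rcases eq_or_ne p q with rfl | hpq
  · rw [hX.mink_eq_zero hpX, mink_comm, hX.mink_eq_zero hqX, add_zero]
  · exact (hlip.mink_add_pos hk hX hpX hqX hpq).le

theorem LipschitzField.eq_of_zero_mem (hk : k < 0) (hX : IsConvexField X)
    (hlip : LipschitzField k X) {p q : V} (hp : (p, 0) ∈ X) (hq : (q, 0) ∈ X) : p = q := by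
  by_contra hpq
  have := hlip.mink_add_pos hk hX hp hq hpq
  simp [mink] at this

theorem LipschitzField.exists_eventually_norm_le (hk : k < 0) (hX : IsConvexField X)
    (hdef : DefinedOver X H2) (hlip : LipschitzField k X) {p x : ℕ → V} {p₀ : V}
    (hp₀ : p₀ ∈ H2) (hp : Tendsto p atTop (𝓝 p₀)) (hx : ∀ n, (p n, x n) ∈ X) :
    ∃ C, ∀ᶠ n in atTop, ‖x n‖ ≤ C := by
  -- Otherwise a limit `w₀` of `x n / ‖x n‖` along a subsequence is a nonzero tangent vector at
  -- `p₀` with `⟨w₀|r⟩ ≥ 0` for every `r ∈ ℍ²`; this fails at `r = exp_{p₀}(-w₀ / mnorm w₀)`.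
  by_contra! hunb
  obtain ⟨φ, hφ, hφx⟩ := extraction_forall_of_frequently fun n : ℕ => hunb n
  have hx0 : ∀ n, 0 < ‖x (φ n)‖ := fun n => (Nat.cast_nonneg n).trans_lt (hφx n)
  obtain ⟨w₀, hw₀, ψ, hψ, hw⟩ :=
    tendsto_subseq_of_bounded (x := fun n => ‖x (φ n)‖⁻¹ • x (φ n))
      (isBounded_sphere (x := (0 : V)) (r := 1)) (fun n => by simp [norm_smul, (hx0 n).ne'])
  rw [isClosed_sphere.closure_eq] at hw₀
  rw [Function.comp_def] at hw
  have hnorm : Tendsto (fun n => ‖x (φ (ψ n))‖) atTop atTop :=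
    tendsto_atTop_mono (fun n => ((Nat.cast_le.mpr (hψ.id_le n)).trans (hφx (ψ n)).le))
      tendsto_natCast_atTop_atTop
  have hpφψ : Tendsto (fun n => p (φ (ψ n))) atTop (𝓝 p₀) := hp.comp (hφ.comp hψ).tendsto_atTop
  have htan : mink w₀ p₀ = 0 := by
    refine tendsto_nhds_unique (hw.mink hpφψ) ?_
    simp only [mink_smul_left, hX.mink_eq_zero (hx _), mul_zero]
    exact tendsto_const_nhds
  have hm := mink_self_pos_of_tangent hp₀ htan (by rintro rfl; simp at hw₀)
  have hmpos : 0 < mnorm w₀ := Real.sqrt_pos.mpr hm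
  have hmsq : mnorm w₀ ^ 2 = mink w₀ w₀ := Real.sq_sqrt hm.le
  set e : V := -(mnorm w₀)⁻¹ • w₀
  have he : mink e e = 1 := by
    simp only [e, mink_smul_left, mink_smul_right, ← hmsq]
    field_simp
  have hep : mink e p₀ = 0 := by rw [mink_smul_left, htan, mul_zero]
  set r := cosh 1 • p₀ + sinh 1 • e
  obtain ⟨y, hy⟩ := hdef r (cosh_smul_add_sinh_smul_mem_H2 hp₀ he hep 1)
  have hwr : mink w₀ r = -(sinh 1 * mnorm w₀) := by
    simp only [r, e, mink_comm w₀, mink_smul_add_smul_left, mink_smul_left,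
      (mink_comm p₀ w₀).trans htan, mul_zero, zero_add, ← hmsq]
    field_simp
  have hlim := (hw.mink (tendsto_const_nhds (x := r))).add
    ((tendsto_inv_atTop_zero.comp hnorm).mul (hpφψ.mink (tendsto_const_nhds (x := y))))
  have hnonneg := ge_of_tendsto' hlim fun n => by
    have := hlip.mink_add_nonneg hk hX (hx (φ (ψ n))) hy
    rw [Function.comp_apply, mink_smul_left, ← mul_add]
    exact mul_nonneg (inv_nonneg.mpr (norm_nonneg _)) this
  rw [hwr, zero_mul, add_zero] at hnonneg
  nlinarith [sinh_pos_iff.mpr one_pos]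

theorem LipschitzField.exists_subseq_tendsto (hk : k < 0) (hX : IsConvexField X)
    (hdef : DefinedOver X H2) (hlip : LipschitzField k X) {p x : ℕ → V} {p₀ : V}
    (hp₀ : p₀ ∈ H2) (hp : Tendsto p atTop (𝓝 p₀)) (hx : ∀ n, (p n, x n) ∈ X) :
    ∃ z, (p₀, z) ∈ X ∧ ∃ φ : ℕ → ℕ, StrictMono φ ∧ Tendsto (x ∘ φ) atTop (𝓝 z) := by
  obtain ⟨C, hC⟩ := hlip.exists_eventually_norm_le hk hX hdef hp₀ hp hx
  obtain ⟨z, -, φ, hφ, hz⟩ :=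
    tendsto_subseq_of_frequently_bounded (isBounded_closedBall (x := 0))
      (hC.frequently.mono fun n hn => mem_closedBall_zero_iff.mpr hn)
  exact ⟨z, hX.1.mem_of_tendsto ((hp.comp hφ.tendsto_atTop).prodMk_nhds hz)
    (Eventually.of_forall fun n => hx _), φ, hφ, hz⟩

theorem LipschitzField.mink_fermiTangent_le (hX : IsConvexField X) (hlip : LipschitzField k X)
    {s t t' : ℝ} {x x' : V} (htt : t < t') (hx : (fermi s t, x) ∈ X)
    (hx' : (fermi s t', x') ∈ X) :
    mink x' (fermiTangent s t') + -k * (t' - t) ≤ mink x (fermiTangent s t) := by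
  have hne : fermi s t ≠ fermi s t' := fun h => htt.ne (fermi_inj.mp h).2
  have h := hlip.neg_mul_hdist_mul_le hX hx hx' hne
  have hsh : 0 < sinh (t' - t) := sinh_pos_iff.mpr (by linarith)
  rw [hdist_eq_arcosh, mink_fermi_fermi_same_leaf, neg_neg, arcosh_cosh (by linarith), neg_sq,
    cosh_sq, add_sub_cancel_right, sqrt_sq hsh.le,
    mink_fermi_same_leaf_of_tangent (hX.mink_eq_zero hx), mink_comm (fermi s t) x',
    mink_fermi_same_leaf_of_tangent (hX.mink_eq_zero hx'), ← neg_sub t' t, sinh_neg] at h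
  nlinarith

theorem LipschitzField.eq_of_mink_fermiTangent_eq_zero (hk : k < 0) (hX : IsConvexField X)
    (hlip : LipschitzField k X) {s t t' : ℝ} {z z' : V} (hz : (fermi s t, z) ∈ X)
    (hzT : mink z (fermiTangent s t) = 0) (hz' : (fermi s t', z') ∈ X)
    (hzT' : mink z' (fermiTangent s t') = 0) : t = t' := by
  rcases lt_trichotomy t t' with h | h | h
  · nlinarith [hlip.mink_fermiTangent_le hX h hz hz']
  · exact h
  · nlinarith [hlip.mink_fermiTangent_le hX h hz' hz]

theorem LipschitzField.neg_mul_abs_le_abs_mink (hX : IsConvexField X)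
    (hlip : LipschitzField k X) {s t : ℝ} {y z : V} (hy : (fermi s 0, y) ∈ X)
    (hz : (fermi s t, z) ∈ X) (hzT : mink z (fermiTangent s t) = 0) :
    -k * |t| ≤ |mink y (fermiTangent s 0)| := by
  rcases lt_trichotomy t 0 with h | rfl | h
  · have := hlip.mink_fermiTangent_le hX h hz hy
    rw [abs_of_neg h]
    linarith [neg_abs_le (mink y (fermiTangent s 0))]
  · simp
  · have := hlip.mink_fermiTangent_le hX h hy hz
    rw [abs_of_pos h]
    linarith [le_abs_self (mink y (fermiTangent s 0))]

theorem LipschitzField.exists_mink_fermiTangent_eq_zero (hk : k < 0) (hX : IsConvexField X)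
    (hdef : DefinedOver X H2) (hlip : LipschitzField k X) (s : ℝ) :
    ∃ t z, (fermi s t, z) ∈ X ∧ mink z (fermiTangent s t) = 0 := by
  obtain ⟨x₀, hx₀⟩ := hdef _ (fermi_mem_H2 s 0)
  set M := mink x₀ (fermiTangent s 0)
  set R := (|M| + 1) / -k
  have hR : 0 < R := div_pos (by positivity) (by linarith)
  have hkR : -k * R = |M| + 1 := mul_div_cancel₀ _ (by linarith)
  refine exists_apply_eq_zero_of_sign_change
    (S := fun t => fiberAt X (fermi s t)) (f := fun t => minkForm.flip (fermiTangent s t))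
    (fun t => hX.convex _) (fun t => hdef _ (fermi_mem_H2 s t)) ?_ ?_ ?_ ?_
  · intro u c z hu hz
    obtain ⟨w, hw, φ, hφ, hzφ⟩ :=
      hlip.exists_subseq_tendsto hk hX hdef (fermi_mem_H2 s c) (tendsto_const_nhds.fermi hu) hz
    exact ⟨w, hw, ((hzφ.mink (tendsto_const_nhds.fermiTangent
      (hu.comp hφ.tendsto_atTop))).mapClusterPt).of_comp hφ.tendsto_atTop⟩
  · intro u u' z z' huu hz hz' hz'T
    have := hlip.mink_fermiTangent_le hX huu hz hz'
    change 0 ≤ mink z' (fermiTangent s u') at hz'T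
    change 0 < mink z (fermiTangent s u)
    nlinarith
  · obtain ⟨z, hz⟩ := hdef _ (fermi_mem_H2 s (-R))
    have := hlip.mink_fermiTangent_le hX (by linarith) hz hx₀
    exact ⟨-R, z, hz, show 0 < mink z (fermiTangent s (-R)) by nlinarith [neg_abs_le M]⟩
  · obtain ⟨z, hz⟩ := hdef _ (fermi_mem_H2 s R)
    have := hlip.mink_fermiTangent_le hX hR hx₀ hz
    exact ⟨R, z, hz, show mink z (fermiTangent s R) < 0 by nlinarith [le_abs_self M]⟩

theorem LipschitzField.mink_fermiNormal_pos (hk : k < 0) (hX : IsConvexField X)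
    (hlip : LipschitzField k X) {s t s' t' : ℝ} {x x' : V} (hss : s < s')
    (hx : (fermi s t, x) ∈ X) (hxT : mink x (fermiTangent s t) = 0)
    (hx' : (fermi s' t', x') ∈ X) (hxT' : mink x' (fermiTangent s' t') = 0)
    (hxN' : 0 ≤ mink x' (fermiNormal s')) : 0 < mink x (fermiNormal s) := by
  have hne : fermi s t ≠ fermi s' t' := fun h => hss.ne (fermi_inj.mp h).1
  have h := hlip.mink_add_pos hk hX hx hx' hne
  rw [mink_fermi_of_normal (hX.mink_eq_zero hx) hxT, mink_comm (fermi s t) x',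
    mink_fermi_of_normal (hX.mink_eq_zero hx') hxT', ← neg_sub s' s, sinh_neg] at h
  have hsh : 0 < sinh (s' - s) := sinh_pos_iff.mpr (by linarith)
  have := mul_pos (cosh_pos t) hsh
  have := mul_pos (cosh_pos t') hsh
  nlinarith

theorem LipschitzField.mink_fermiNormal_gap_of_far (hk : k < 0) (hX : IsConvexField X)
    (hlip : LipschitzField k X) {s t s' t' : ℝ} {x x' : V} (hss : s + 2 ≤ s')
    (hx : (fermi s t, x) ∈ X) (hxT : mink x (fermiTangent s t) = 0)
    (hx' : (fermi s' t', x') ∈ X) (hxT' : mink x' (fermiTangent s' t') = 0) :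
    -k * (s' - s) / 2 * (cosh t * cosh t')
      ≤ mink x (fermiNormal s) * cosh t' - mink x' (fermiNormal s') * cosh t := by
  have hne : fermi s t ≠ fermi s' t' := fun h => by linarith [(fermi_inj.mp h).1]
  have h := hlip.neg_mul_hdist_mul_le hX hx hx' hne
  rw [mink_fermi_of_normal (hX.mink_eq_zero hx) hxT, mink_comm (fermi s t) x',
    mink_fermi_of_normal (hX.mink_eq_zero hx') hxT', ← neg_sub s' s, sinh_neg] at h
  set c := -mink (fermi s t) (fermi s' t')
  have hcc : 1 ≤ cosh t * cosh t' :=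
    one_le_mul_of_one_le_of_one_le (one_le_cosh t) (one_le_cosh t')
  have hc : cosh t * cosh t' * (cosh (s' - s) - 1) + 1 ≤ c := by
    have := one_le_cosh (t - t')
    rw [cosh_sub] at this
    simp only [c, mink_fermi_fermi, ← neg_sub s' s, cosh_neg]
    linarith
  have hc1 : 1 ≤ c := by nlinarith [one_le_cosh (s' - s)]
  have hΔ := add_sinh_div_two_le_cosh (d := s' - s) (by linarith)
  have hsh : 0 < sinh (s' - s) := sinh_pos_iff.mpr (by linarith)
  have hd : s' - s ≤ hdist (fermi s t) (fermi s' t') := by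
    rw [hdist_eq_arcosh, ← arcosh_cosh (x := s' - s) (by linarith)]
    exact (arcosh_le_arcosh (cosh_pos _) (by nlinarith)).mpr (by nlinarith)
  have hr : cosh t * cosh t' * (sinh (s' - s) / 2)
      ≤ √(mink (fermi s t) (fermi s' t') ^ 2 - 1) := by
    rw [← neg_sq]
    calc cosh t * cosh t' * (sinh (s' - s) / 2) ≤ c - 1 := by nlinarith
      _ ≤ √(c ^ 2 - 1) := by
        rw [le_sqrt (by linarith) (by nlinarith)]; nlinarith
  have hprod := mul_le_mul hd hr (by positivity) (by linarith)
  refine le_of_mul_le_mul_right ?_ hsh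
  nlinarith

theorem LipschitzField.mink_fermiNormal_neg_of_far (hk : k < 0) (hX : IsConvexField X)
    (hlip : LipschitzField k X) {s t s' t' : ℝ} {x x' : V} (hss : s + 2 ≤ s')
    (hx : (fermi s t, x) ∈ X) (hxT : mink x (fermiTangent s t) = 0)
    (hx' : (fermi s' t', x') ∈ X) (hxT' : mink x' (fermiTangent s' t') = 0)
    (hxN : mink x (fermiNormal s) < -k * (s' - s) / 2) : mink x' (fermiNormal s') < 0 := by
  have h := hlip.mink_fermiNormal_gap_of_far hk hX hss hx hxT hx' hxT'
  by_contra! hxN'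
  have hc : 0 < -k * (s' - s) / 2 := by nlinarith
  have hct := one_le_cosh t
  nlinarith [mul_nonneg hxN' (cosh_pos t).le, mul_pos (sub_pos.2 hxN) (cosh_pos t'),
    mul_nonneg (mul_nonneg hc.le (sub_nonneg.2 hct)) (cosh_pos t').le]

theorem LipschitzField.mink_fermiNormal_pos_of_far (hk : k < 0) (hX : IsConvexField X)
    (hlip : LipschitzField k X) {s t s' t' : ℝ} {x x' : V} (hss : s + 2 ≤ s')
    (hx : (fermi s t, x) ∈ X) (hxT : mink x (fermiTangent s t) = 0)
    (hx' : (fermi s' t', x') ∈ X) (hxT' : mink x' (fermiTangent s' t') = 0)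
    (hxN' : k * (s' - s) / 2 < mink x' (fermiNormal s')) : 0 < mink x (fermiNormal s) := by
  have h := hlip.mink_fermiNormal_gap_of_far hk hX hss hx hxT hx' hxT'
  by_contra! hxN
  have hc : 0 < -k * (s' - s) / 2 := by nlinarith
  have hct' := one_le_cosh t'
  nlinarith [mul_nonpos_of_nonpos_of_nonneg hxN (cosh_pos t').le,
    mul_pos (by linarith : 0 < mink x' (fermiNormal s') + -k * (s' - s) / 2) (cosh_pos t),
    mul_nonneg (mul_nonneg hc.le (cosh_pos t).le) (sub_nonneg.2 hct')]

theorem LipschitzField.exists_mapClusterPt_mink_fermiNormal (hk : k < 0) (hX : IsConvexField X)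
    (hdef : DefinedOver X H2) (hlip : LipschitzField k X) {s t : ℕ → ℝ} {z : ℕ → V} {c : ℝ}
    (hs : Tendsto s atTop (𝓝 c)) (hz : ∀ n, (fermi (s n) (t n), z n) ∈ X)
    (hzT : ∀ n, mink (z n) (fermiTangent (s n) (t n)) = 0) :
    ∃ t₀ w, (fermi c t₀, w) ∈ X ∧ mink w (fermiTangent c t₀) = 0 ∧
      MapClusterPt (mink w (fermiNormal c)) atTop fun n => mink (z n) (fermiNormal (s n)) := by
  choose y hy using fun n => hdef _ (fermi_mem_H2 (s n) 0)
  obtain ⟨C, hC⟩ := hlip.exists_eventually_norm_le hk hX hdef (fermi_mem_H2 c 0)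
    (hs.fermi tendsto_const_nhds) hy
  have hT := (hs.fermiTangent (tendsto_const_nhds (x := (0 : ℝ)))).norm.eventually
    (eventually_le_nhds (lt_add_one ‖fermiTangent c 0‖))
  have ht : ∀ᶠ n in atTop,
      t n ∈ closedBall (0 : ℝ) (3 * (C * (‖fermiTangent c 0‖ + 1)) / -k) := by
    filter_upwards [hC, hT] with n hCn hTn
    rw [mem_closedBall_zero_iff, Real.norm_eq_abs, le_div_iff₀ (by linarith), mul_comm]
    calc -k * |t n| ≤ |mink (y n) (fermiTangent (s n) 0)| :=
          hlip.neg_mul_abs_le_abs_mink hX (hy n) (hz n) (hzT n)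
      _ ≤ 3 * (‖y n‖ * ‖fermiTangent (s n) 0‖) := abs_mink_le _ _
      _ ≤ 3 * (C * (‖fermiTangent c 0‖ + 1)) := by
          gcongr
          exact (norm_nonneg _).trans hCn
  obtain ⟨t₀, -, φ, hφ, htφ⟩ :=
    tendsto_subseq_of_frequently_bounded isBounded_closedBall ht.frequently
  obtain ⟨w, hw, ψ, hψ, hzψ⟩ := hlip.exists_subseq_tendsto hk hX hdef (fermi_mem_H2 c t₀)
    ((hs.comp hφ.tendsto_atTop).fermi htφ) (fun n => hz (φ n))
  have hφψ := (hφ.comp hψ).tendsto_atTop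
  refine ⟨t₀, w, hw, tendsto_nhds_unique
    (hzψ.mink ((hs.comp hφψ).fermiTangent (htφ.comp hψ.tendsto_atTop))) ?_, ?_⟩
  · simp only [Function.comp_apply, hzT]
    exact tendsto_const_nhds
  · exact (hzψ.mink (hs.comp hφψ).fermiNormal).mapClusterPt.of_comp hφψ

theorem LipschitzField.exists_zero_mem (hk : k < 0) (hX : IsConvexField X)
    (hdef : DefinedOver X H2) (hlip : LipschitzField k X) : ∃ p ∈ H2, (p, 0) ∈ X := by
  set S : ℝ → Set V := fun s => {z | ∃ t, (fermi s t, z) ∈ X ∧ mink z (fermiTangent s t) = 0}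
  have hS : ∀ s, Convex ℝ (S s) := by
    rintro s z ⟨t, hz, hzT⟩ z' ⟨t', hz', hzT'⟩ a b ha hb hab
    obtain rfl := hlip.eq_of_mink_fermiTangent_eq_zero hk hX hz hzT hz' hzT'
    exact ⟨t, hX.convex _ hz hz' ha hb hab, by rw [mink_smul_add_smul_left, hzT, hzT']; ring⟩
  have hne : ∀ s, ∃ t z, (fermi s t, z) ∈ X ∧ mink z (fermiTangent s t) = 0 :=
    hlip.exists_mink_fermiTangent_eq_zero hk hX hdef
  obtain ⟨t₀, z₀, hz₀, hz₀T⟩ := hne 0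
  set A := mink z₀ (fermiNormal 0)
  set D := 2 + 2 * |A| / -k
  have hD : 2 ≤ D := le_add_of_nonneg_right (div_nonneg (by positivity) (by linarith))
  have hkD : -k * D / 2 = -k + |A| := by
    simp only [D]; field_simp [hk.ne]; ring
  obtain ⟨s, z, ⟨t, hz, hzT⟩, hzN⟩ := exists_apply_eq_zero_of_sign_change (S := S)
    (f := fun s => minkForm.flip (fermiNormal s)) hS
    (fun s => (hne s).elim fun t ⟨z, hz⟩ => ⟨z, t, hz⟩)
    (fun u c z hu hz => by
      choose t hz hzT using hz
      obtain ⟨t₀, w, hw, hwT, hcl⟩ :=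
        hlip.exists_mapClusterPt_mink_fermiNormal hk hX hdef hu hz hzT
      exact ⟨w, ⟨t₀, hw, hwT⟩, hcl⟩)
    (fun u u' z z' huu ⟨t, hz, hzT⟩ ⟨t', hz', hzT'⟩ hzN' =>
      hlip.mink_fermiNormal_pos hk hX huu hz hzT hz' hzT' hzN')
    (by
      obtain ⟨t, z, hz, hzT⟩ := hne (-D)
      refine ⟨-D, z, ⟨t, hz, hzT⟩, hlip.mink_fermiNormal_pos_of_far hk hX (by linarith)
        hz hzT hz₀ hz₀T ?_⟩
      nlinarith [neg_abs_le A])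
    (by
      obtain ⟨t, z, hz, hzT⟩ := hne D
      refine ⟨D, z, ⟨t, hz, hzT⟩, hlip.mink_fermiNormal_neg_of_far hk hX (by linarith)
        hz₀ hz₀T hz hzT ?_⟩
      nlinarith [le_abs_self A])
  exact ⟨fermi s t, fermi_mem_H2 s t, eq_zero_of_tangent_fermi (hX.mink_eq_zero hz) hzT hzN ▸ hz⟩

end LipschitzField

/-- Proposition 3.3: a `k`-lipschitz convex field with `k < 0`, defined over
all of `ℍ²`, has a unique zero. -/
theorem statement8 (k : ℝ) (hk : k < 0) (X : Set (V × V)) (hX : IsConvexField X)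
    (hdef : DefinedOver X H2) (hlip : LipschitzField k X) :
    ∃! p : V, p ∈ H2 ∧ (p, (0 : V)) ∈ X := by
  obtain ⟨p, hp, hp0⟩ := hlip.exists_zero_mem hk hX hdef
  exact ⟨p, ⟨hp, hp0⟩, fun q ⟨_, hq0⟩ => hlip.eq_of_zero_mem hk hX hq0 hp0⟩
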